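/- arXiv:2004.11631 — 4 statements merged into one kernel-verified Lean document; each statement's English description precedes it below -/
import Mathlib

section
/- Let 1 ≤ p < ∞ and X = ℓ^p, the Banach space of p-summable complex sequences indexed by m ≥ 1. Let R be the group of operators γ on X of the form (γx)_m = e^{2πik_m/m} x_m for arbitrary choices k₂, k₃, … ∈ ℕ ∪ {0} (the first coordinate unchanged). Suppose K ⊆ X satisfies γ(K) ⊆ K for every γ ∈ R and π_{j_n}(K) ⊆ K for some strictly increasing sequence (j_n) of naturals, where π_n is the truncation operator. If z ∈ X \ K can be separated from K by a continuous polynomial Q (sup_{w∈K}|Q(w)| < |Q(z)|), then there exists a continuous polynomial P on X with P ∘ γ = P for every γ ∈ R and sup_{w∈K}|P(w)| < |P(z)|. Furthermore, if Q is homogeneous, then P can be chosen to be homogeneous. -/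
open scoped ENNReal

/-- A continuous polynomial on a complex normed space `X`. -/
def IsContinuousPolynomial {X : Type*} [NormedAddCommGroup X] [NormedSpace ℂ X]
    (P : X → ℂ) : Prop :=
  ∃ (N : ℕ) (a₀ : ℂ)
    (A : (k : Fin N) → ContinuousMultilinearMap ℂ (fun _ : Fin (k.1 + 1) => X) ℂ),
    ∀ x, P x = a₀ + ∑ k, A k (fun _ => x)

/-- An `m`-homogeneous continuous polynomial on a complex normed space `X`. -/
def IsHomogeneousPolynomial {X : Type*} [NormedAddCommGroup X] [NormedSpace ℂ X]
    (m : ℕ) (P : X → ℂ) : Prop :=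
  ∃ A : ContinuousMultilinearMap ℂ (fun _ : Fin m => X) ℂ, ∀ x, P x = A (fun _ => x)

/-- `x'` is obtained from `x` by the action of the element of the group `R` of multipliers by
roots of unity determined by `k = (k_m)`: the coordinate with (1-based) index `m = j + 1` is
multiplied by `e^{2πi k_m / m}`. -/
def rootsOfUnityRel {p : ℝ≥0∞} [Fact (1 ≤ p)] (k : ℕ → ℕ)
    (x x' : lp (fun _ : ℕ => ℂ) p) : Prop :=
  ∀ j : ℕ, x' j = Complex.exp (2 * Real.pi * Complex.I * (k j : ℂ) / ((j : ℂ) + 1)) * x j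

/-!
Truncating to the first `N = j n` coordinates (for `n` large, by continuity of `Q`) reduces the
problem to the finite group `G = ∏_{i < N} ℤ/(i+1)` acting diagonally on `ℂ^N`, under which the
truncated copy of `K` is invariant. Raise `Q` to a power `s` with `|G| c^s < |Q z|^s`. The
character averages `g_ψ(v) = ∑_t ψ(-t) Q^s(t • v)` transform by `ψ`, are bounded on `K` by
`|G| c^s`, and sum over `ψ` to `|G| Q^s`, so one of them is at least `|Q z|^s` at `z`. Its
`|G|`-th power is then a `G`-invariant, hence `R`-invariant, separating polynomial, homogeneous
whenever `Q` is.
-/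

open Finset Filter Topology

section Polynomials

variable {X Y : Type*} [NormedAddCommGroup X] [NormedSpace ℂ X]
  [NormedAddCommGroup Y] [NormedSpace ℂ Y]

lemma isHomogeneousPolynomial_const (a : ℂ) : IsHomogeneousPolynomial 0 (fun _ : X => a) :=
  ⟨ContinuousMultilinearMap.constOfIsEmpty ℂ _ a, fun _ => rfl⟩

lemma IsHomogeneousPolynomial.comp {m : ℕ} {f : Y → ℂ} (hf : IsHomogeneousPolynomial m f)
    (L : X →L[ℂ] Y) : IsHomogeneousPolynomial m (f ∘ L) := by
  obtain ⟨A, hA⟩ := hf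
  exact ⟨A.compContinuousLinearMap fun _ => L, fun x => hA (L x)⟩

lemma IsHomogeneousPolynomial.mul {m n : ℕ} {f g : X → ℂ} (hf : IsHomogeneousPolynomial m f)
    (hg : IsHomogeneousPolynomial n g) : IsHomogeneousPolynomial (m + n) (f * g) := by
  obtain ⟨A, hA⟩ := hf
  obtain ⟨B, hB⟩ := hg
  refine ⟨(A.smulRight B).uncurrySum.domDomCongr finSumFinEquiv, fun x => ?_⟩
  simp [hA, hB, Function.comp_def]

lemma IsHomogeneousPolynomial.pow {m : ℕ} {f : X → ℂ} (hf : IsHomogeneousPolynomial m f)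
    (s : ℕ) : IsHomogeneousPolynomial (m * s) (f ^ s) := by
  induction s with
  | zero => exact isHomogeneousPolynomial_const 1
  | succ s ih => simpa [pow_succ, mul_add] using ih.mul hf

variable (X) in
def homogeneousSubmodule (m : ℕ) : Submodule ℂ (X → ℂ) where
  carrier := {f | IsHomogeneousPolynomial m f}
  zero_mem' := ⟨0, fun _ => rfl⟩
  add_mem' := by
    rintro f g ⟨A, hA⟩ ⟨B, hB⟩
    exact ⟨A + B, fun x => by simp [hA, hB]⟩
  smul_mem' := by
    rintro a f ⟨A, hA⟩
    exact ⟨a • A, fun x => by simp [hA]⟩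

variable (X) in
def homogeneousSubmonoid : Submonoid (X → ℂ) where
  carrier := {f | ∃ m, IsHomogeneousPolynomial m f}
  one_mem' := ⟨0, isHomogeneousPolynomial_const 1⟩
  mul_mem' := by
    rintro f g ⟨m, hf⟩ ⟨n, hg⟩
    exact ⟨m + n, hf.mul hg⟩

variable (X) in
def polynomialSubalgebra : Subalgebra ℂ (X → ℂ) :=
  Algebra.adjoin ℂ (homogeneousSubmonoid X)

lemma IsContinuousPolynomial.mem_polynomialSubalgebra {f : X → ℂ}
    (hf : IsContinuousPolynomial f) : f ∈ polynomialSubalgebra X := by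
  obtain ⟨N, a₀, A, hA⟩ := hf
  have hsum : f = algebraMap ℂ (X → ℂ) a₀ + ∑ k, fun x => A k fun _ => x := by
    ext x
    simp [hA]
  rw [hsum]
  refine add_mem (Subalgebra.algebraMap_mem _ a₀) (sum_mem fun k _ => ?_)
  exact Algebra.subset_adjoin ⟨k.1 + 1, A k, fun _ => rfl⟩

lemma isContinuousPolynomial_of_series {f : X → ℂ} (A : FormalMultilinearSeries ℂ X ℂ) (D : ℕ)
    (hA : ∀ x, f x = ∑ n ∈ range (D + 1), A n fun _ => x) : IsContinuousPolynomial f := by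
  refine ⟨D, A 0 fun _ => 0, fun k => A (k.1 + 1), fun x => ?_⟩
  rw [hA, sum_range_succ', add_comm, Fin.sum_univ_eq_sum_range (fun k => A (k + 1) fun _ => x)]
  congr 2
  exact Subsingleton.elim _ _

lemma IsContinuousPolynomial.of_mem_polynomialSubalgebra {f : X → ℂ}
    (hf : f ∈ polynomialSubalgebra X) : IsContinuousPolynomial f := by
  have hspan : f ∈ Submodule.span ℂ (homogeneousSubmonoid X : Set (X → ℂ)) := by
    rw [← Submonoid.closure_eq (homogeneousSubmonoid X), ← Algebra.adjoin_eq_span]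
    exact hf
  clear hf
  -- Asking for the representation over every longer range makes sums of representations trivial.
  obtain ⟨A, D, hA⟩ : ∃ (A : FormalMultilinearSeries ℂ X ℂ) (D : ℕ),
      ∀ D' ≥ D, ∀ x, f x = ∑ n ∈ range D', A n fun _ => x := by
    induction hspan using Submodule.span_induction with
    | mem g hg =>
      obtain ⟨m, B, hB⟩ := hg
      refine ⟨Pi.single m B, m + 1, fun D' hD' x => ?_⟩
      rw [sum_eq_single m (fun n _ hn => by simp [Pi.single_eq_of_ne hn])
        (fun hm => absurd (mem_range.2 (by omega)) hm), Pi.single_eq_same, hB]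
    | zero => exact ⟨0, 0, fun _ _ _ => by simp⟩
    | add g h _ _ hg hh =>
      obtain ⟨A, D, hA⟩ := hg
      obtain ⟨B, E, hB⟩ := hh
      refine ⟨A + B, max D E, fun D' hD' x => ?_⟩
      simp [hA D' (le_of_max_le_left hD'), hB D' (le_of_max_le_right hD'), sum_add_distrib]
    | smul a g _ hg =>
      obtain ⟨A, D, hA⟩ := hg
      exact ⟨a • A, D, fun D' hD' x => by simp [hA D' hD', mul_sum]⟩
  exact isContinuousPolynomial_of_series A D (hA (D + 1) (Nat.le_succ D))

lemma IsContinuousPolynomial.comp {f : Y → ℂ} (hf : IsContinuousPolynomial f) (L : X →L[ℂ] Y) :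
    IsContinuousPolynomial (f ∘ L) := by
  obtain ⟨N, a₀, A, hA⟩ := hf
  exact ⟨N, a₀, fun k => (A k).compContinuousLinearMap fun _ => L, fun x => hA (L x)⟩

lemma IsContinuousPolynomial.pow {f : X → ℂ} (hf : IsContinuousPolynomial f) (s : ℕ) :
    IsContinuousPolynomial (f ^ s) :=
  .of_mem_polynomialSubalgebra (pow_mem hf.mem_polynomialSubalgebra s)

lemma IsContinuousPolynomial.continuous {f : X → ℂ} (hf : IsContinuousPolynomial f) :
    Continuous f := by
  obtain ⟨N, a₀, A, hA⟩ := hf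
  rw [funext hA]
  exact continuous_const.add (continuous_finsetSum _ fun k _ =>
    (A k).cont.comp (continuous_pi fun _ => continuous_id))

end Polynomials

section CharacterAverage

variable {G V : Type*} [AddCommGroup G] [Fintype G] [AddAction G V]

noncomputable def charAverage (ψ : AddChar G ℂ) (f : V → ℂ) (v : V) : ℂ :=
  ∑ t : G, ψ (-t) * f (t +ᵥ v)

lemma charAverage_vadd (ψ : AddChar G ℂ) (f : V → ℂ) (u : G) (v : V) :
    charAverage ψ f (u +ᵥ v) = ψ u * charAverage ψ f v := by
  simp only [charAverage, mul_sum, vadd_vadd]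
  refine Fintype.sum_equiv (Equiv.addRight u) _ _ fun t => ?_
  rw [Equiv.coe_addRight, ← mul_assoc, ← AddChar.map_add_eq_mul, neg_add_rev, add_neg_cancel_left]

lemma charAverage_pow_card_vadd (ψ : AddChar G ℂ) (f : V → ℂ) (u : G) (v : V) :
    charAverage ψ f (u +ᵥ v) ^ Fintype.card G = charAverage ψ f v ^ Fintype.card G := by
  rw [charAverage_vadd, mul_pow, ← AddChar.map_nsmul_eq_pow, card_nsmul_eq_zero,
    AddChar.map_zero_eq_one, one_mul]

lemma sum_charAverage (f : V → ℂ) (v : V) :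
    ∑ ψ : AddChar G ℂ, charAverage ψ f v = Fintype.card G * f v := by
  classical
  simp only [charAverage]
  rw [sum_comm]
  simp only [← sum_mul, AddChar.sum_apply_eq_ite, neg_eq_zero, ite_mul, zero_mul,
    sum_ite_eq', mem_univ, if_true, zero_vadd]

lemma norm_charAverage_le (ψ : AddChar G ℂ) {f : V → ℂ} {v : V} {c : ℝ}
    (hf : ∀ t : G, ‖f (t +ᵥ v)‖ ≤ c) : ‖charAverage ψ f v‖ ≤ Fintype.card G * c := by
  calc ‖charAverage ψ f v‖ ≤ ∑ t : G, ‖ψ (-t) * f (t +ᵥ v)‖ := norm_sum_le _ _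
    _ ≤ ∑ _t : G, c := sum_le_sum fun t _ => by rw [norm_mul, ψ.norm_apply, one_mul]; exact hf t
    _ = Fintype.card G * c := by simp

lemma charAverage_mem (ψ : AddChar G ℂ) {f : V → ℂ} {M : Submodule ℂ (V → ℂ)}
    (hf : ∀ t : G, (fun v => f (t +ᵥ v)) ∈ M) : charAverage ψ f ∈ M := by
  have : charAverage ψ f = ∑ t : G, ψ (-t) • fun v => f (t +ᵥ v) := by
    ext v
    simp [charAverage]
  rw [this]
  exact sum_mem fun t _ => M.smul_mem _ (hf t)

theorem exists_charAverage_pow_separates {K : Set V} (hK : ∀ t : G, ∀ w ∈ K, t +ᵥ w ∈ K)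
    {f : V → ℂ} {z : V} {c : ℝ} (hc : 0 ≤ c) (hz : c < ‖f z‖) (hfK : ∀ w ∈ K, ‖f w‖ ≤ c) :
    ∃ (s : ℕ) (ψ : AddChar G ℂ) (c' : ℝ),
      c' < ‖charAverage ψ (f ^ s) z ^ Fintype.card G‖ ∧
      ∀ w ∈ K, ‖charAverage ψ (f ^ s) w ^ Fintype.card G‖ ≤ c' := by
  set b := ‖f z‖
  have hb : 0 < b := hc.trans_lt hz
  have hG : (0 : ℝ) < Fintype.card G := by exact_mod_cast Fintype.card_pos
  obtain ⟨s, hs⟩ : ∃ s : ℕ, (c / b) ^ s < 1 / Fintype.card G :=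
    exists_pow_lt_of_lt_one (by positivity) ((div_lt_one hb).2 hz)
  have hsep : Fintype.card G * c ^ s < b ^ s := by
    rw [div_pow, div_lt_div_iff₀ (by positivity) hG] at hs
    linarith
  obtain ⟨ψ, -, hψ⟩ : ∃ ψ ∈ (univ : Finset (AddChar G ℂ)), b ^ s ≤ ‖charAverage ψ (f ^ s) z‖ := by
    refine exists_le_of_sum_le univ_nonempty ?_
    calc ∑ _ψ : AddChar G ℂ, b ^ s = ‖∑ ψ : AddChar G ℂ, charAverage ψ (f ^ s) z‖ := by
          simp [sum_charAverage, b]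
      _ ≤ _ := norm_sum_le _ _
  have hψK : ∀ w ∈ K, ‖charAverage ψ (f ^ s) w‖ ≤ Fintype.card G * c ^ s := fun w hw =>
    norm_charAverage_le ψ fun t => by
      rw [Pi.pow_apply, norm_pow]
      exact pow_le_pow_left₀ (norm_nonneg _) (hfK _ (hK t w hw)) s
  refine ⟨s, ψ, (Fintype.card G * c ^ s) ^ Fintype.card G, ?_, fun w hw => ?_⟩
  · rw [norm_pow]
    exact pow_lt_pow_left₀ (hsep.trans_le hψ) (by positivity) Fintype.card_ne_zero
  · rw [norm_pow]
    exact pow_le_pow_left₀ (norm_nonneg _) (hψK w hw) _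

end CharacterAverage

section Truncation

variable (p : ℝ≥0∞) [Fact (1 ≤ p)] (N : ℕ)

noncomputable def firstCoords : lp (fun _ : ℕ => ℂ) p →L[ℂ] (Fin N → ℂ) :=
  ContinuousLinearMap.pi fun i => lp.evalCLM ℂ (fun _ : ℕ => ℂ) p i

noncomputable def zeroExtend : (Fin N → ℂ) →L[ℂ] lp (fun _ : ℕ => ℂ) p :=
  ∑ i : Fin N,
    (lp.singleContinuousLinearMap ℂ (fun _ : ℕ => ℂ) p i).comp (ContinuousLinearMap.proj i)

variable {p N}

@[simp]
lemma firstCoords_apply (x : lp (fun _ : ℕ => ℂ) p) (i : Fin N) : firstCoords p N x i = x i :=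
  rfl

lemma zeroExtend_eq_sum (v : Fin N → ℂ) :
    zeroExtend p N v = ∑ i : Fin N, lp.single p (i : ℕ) (v i) := by
  simp [zeroExtend]

lemma zeroExtend_apply (v : Fin N → ℂ) (n : ℕ) :
    zeroExtend p N v n = if h : n < N then v ⟨n, h⟩ else 0 := by
  rw [zeroExtend_eq_sum, lp.coeFn_sum, Finset.sum_apply]
  simp only [lp.single_apply, Pi.single_apply]
  split_ifs with h
  · rw [Finset.sum_eq_single ⟨n, h⟩ (fun i _ hi => if_neg fun e => hi (Fin.ext e.symm)) (by simp)]
    simp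
  · exact Finset.sum_eq_zero fun i _ => if_neg fun e : n = i => h (e ▸ i.2)

lemma zeroExtend_firstCoords_apply (x : lp (fun _ : ℕ => ℂ) p) (n : ℕ) :
    zeroExtend p N (firstCoords p N x) n = if n < N then x n else 0 := by
  rw [zeroExtend_apply]
  split_ifs <;> rfl

lemma tendsto_zeroExtend_firstCoords (hp : p ≠ ∞) (x : lp (fun _ : ℕ => ℂ) p) :
    Tendsto (fun N => zeroExtend p N (firstCoords p N x)) atTop (𝓝 x) := by
  convert (lp.hasSum_single hp x).tendsto_sum_nat using 2 with N
  rw [zeroExtend_eq_sum]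
  exact Fin.sum_univ_eq_sum_range (fun i => lp.single p i (x i)) N

end Truncation

section Phases

abbrev PhaseGroup (N : ℕ) := ∀ i : Fin N, ZMod (i + 1)

variable {N : ℕ}

noncomputable instance : AddAction (PhaseGroup N) (Fin N → ℂ) where
  vadd t v i := ZMod.stdAddChar (t i) * v i
  zero_vadd v := funext fun i => by
    change ZMod.stdAddChar 0 * v i = v i
    rw [AddChar.map_zero_eq_one, one_mul]
  add_vadd s t v := funext fun i => by
    change ZMod.stdAddChar (s i + t i) * v i =
      ZMod.stdAddChar (s i) * (ZMod.stdAddChar (t i) * v i)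
    rw [AddChar.map_add_eq_mul, mul_assoc]

lemma phaseGroup_vadd_apply (t : PhaseGroup N) (v : Fin N → ℂ) (i : Fin N) :
    (t +ᵥ v) i = ZMod.stdAddChar (t i) * v i :=
  rfl

noncomputable def phaseCLM (t : PhaseGroup N) : (Fin N → ℂ) →L[ℂ] (Fin N → ℂ) :=
  ContinuousLinearMap.pi fun i => ZMod.stdAddChar (t i) • ContinuousLinearMap.proj i

variable {p : ℝ≥0∞} [Fact (1 ≤ p)]

lemma firstCoords_eq_vadd_of_rootsOfUnityRel {k : ℕ → ℕ} {x x' : lp (fun _ : ℕ => ℂ) p}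
    (h : rootsOfUnityRel k x x') :
    firstCoords p N x' = (fun i : Fin N => (k i : ZMod (i + 1))) +ᵥ firstCoords p N x := by
  ext i
  rw [firstCoords_apply, h i, phaseGroup_vadd_apply, ← Int.cast_natCast (R := ZMod _),
    ZMod.stdAddChar_coe]
  push_cast
  rfl

lemma rootsOfUnityRel_zeroExtend_vadd (t : PhaseGroup N) (v : Fin N → ℂ) :
    rootsOfUnityRel (fun n => if h : n < N then (t ⟨n, h⟩).val else 0)
      (zeroExtend p N v) (zeroExtend p N (t +ᵥ v)) := by
  intro n
  rw [zeroExtend_apply, zeroExtend_apply]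
  split_ifs with h
  · rw [phaseGroup_vadd_apply, ZMod.stdAddChar_apply, ZMod.toCircle_apply]
    simp only [dif_pos h]
    push_cast
    rfl
  · rw [mul_zero]

end Phases

section Symmetrization

variable {p : ℝ≥0∞} [Fact (1 ≤ p)]

variable (p) in
noncomputable def symmetrizedPower (N s : ℕ) (ψ : AddChar (PhaseGroup N) ℂ)
    (Q : lp (fun _ : ℕ => ℂ) p → ℂ) : lp (fun _ : ℕ => ℂ) p → ℂ :=
  (charAverage ψ ((Q ∘ zeroExtend p N) ^ s) ^ Fintype.card (PhaseGroup N)) ∘ firstCoords p N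

variable {N s : ℕ} {ψ : AddChar (PhaseGroup N) ℂ} {Q : lp (fun _ : ℕ => ℂ) p → ℂ}

lemma symmetrizedPower_eq_of_rootsOfUnityRel {k : ℕ → ℕ} {x x' : lp (fun _ : ℕ => ℂ) p}
    (h : rootsOfUnityRel k x x') :
    symmetrizedPower p N s ψ Q x' = symmetrizedPower p N s ψ Q x := by
  simp only [symmetrizedPower, Function.comp_apply, Pi.pow_apply,
    firstCoords_eq_vadd_of_rootsOfUnityRel h, charAverage_pow_card_vadd]

lemma IsContinuousPolynomial.symmetrizedPower (hQ : IsContinuousPolynomial Q) :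
    IsContinuousPolynomial (symmetrizedPower p N s ψ Q) := by
  refine IsContinuousPolynomial.comp (.pow ?_ _) _
  refine .of_mem_polynomialSubalgebra
    (charAverage_mem (M := Subalgebra.toSubmodule (polynomialSubalgebra _)) ψ fun t => ?_)
  exact (((hQ.comp _).pow s).comp (phaseCLM t)).mem_polynomialSubalgebra

lemma IsHomogeneousPolynomial.symmetrizedPower {m : ℕ} (hQ : IsHomogeneousPolynomial m Q) :
    IsHomogeneousPolynomial (m * s * Fintype.card (PhaseGroup N))
      (symmetrizedPower p N s ψ Q) :=
  IsHomogeneousPolynomial.comp (.pow (charAverage_mem (M := homogeneousSubmodule _ _) ψ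
    fun t => ((hQ.comp _).pow s).comp (phaseCLM t)) _) _

theorem exists_symmetrizedPower_separates (hp : p ≠ ∞) {K : Set (lp (fun _ : ℕ => ℂ) p)}
    (hKinv : ∀ (k : ℕ → ℕ) (x x' : lp (fun _ : ℕ => ℂ) p),
      x ∈ K → rootsOfUnityRel k x x' → x' ∈ K)
    {j : ℕ → ℕ} (hj : StrictMono j)
    (hKtrunc : ∀ (n : ℕ) (x x' : lp (fun _ : ℕ => ℂ) p), x ∈ K →
      (∀ i : ℕ, x' i = if i < j n then x i else 0) → x' ∈ K)
    {z : lp (fun _ : ℕ => ℂ) p} (hQ : Continuous Q) {c : ℝ} (hc : 0 ≤ c)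
    (hcz : c < ‖Q z‖) (hcK : ∀ w ∈ K, ‖Q w‖ ≤ c) :
    ∃ (N s : ℕ) (ψ : AddChar (PhaseGroup N) ℂ) (c' : ℝ), c' < ‖symmetrizedPower p N s ψ Q z‖ ∧
      ∀ w ∈ K, ‖symmetrizedPower p N s ψ Q w‖ ≤ c' := by
  obtain ⟨n, hn⟩ : ∃ n, c < ‖Q (zeroExtend p (j n) (firstCoords p (j n) z))‖ :=
    ((hQ.tendsto z).comp ((tendsto_zeroExtend_firstCoords hp z).comp hj.tendsto_atTop)).norm
      |>.eventually (eventually_gt_nhds hcz) |>.exists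
  set KN : Set (Fin (j n) → ℂ) := {v | zeroExtend p (j n) v ∈ K}
  have hKN : ∀ t : PhaseGroup (j n), ∀ v ∈ KN, t +ᵥ v ∈ KN := fun t v hv =>
    hKinv _ _ _ hv (rootsOfUnityRel_zeroExtend_vadd t v)
  have hfirst : ∀ w ∈ K, firstCoords p (j n) w ∈ KN := fun w hw =>
    hKtrunc n w _ hw (zeroExtend_firstCoords_apply w)
  obtain ⟨s, ψ, c', hz, hK⟩ :=
    exists_charAverage_pow_separates hKN hc hn (f := Q ∘ zeroExtend p (j n)) fun v hv => hcK _ hv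
  exact ⟨j n, s, ψ, c', hz, fun w hw => hK _ (hfirst w hw)⟩

end Symmetrization

theorem statement9_general (p : ℝ≥0∞) [Fact (1 ≤ p)] (hp : p ≠ ∞)
    (K : Set (lp (fun _ : ℕ => ℂ) p))
    (hKinv : ∀ (k : ℕ → ℕ) (x x' : lp (fun _ : ℕ => ℂ) p),
      x ∈ K → rootsOfUnityRel k x x' → x' ∈ K)
    (j : ℕ → ℕ) (hjmono : StrictMono j)
    (hKtrunc : ∀ (n : ℕ) (x x' : lp (fun _ : ℕ => ℂ) p), x ∈ K →
      (∀ i : ℕ, x' i = if i < j n then x i else 0) → x' ∈ K)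
    (z : lp (fun _ : ℕ => ℂ) p)
    (Q : lp (fun _ : ℕ => ℂ) p → ℂ) (hQ : IsContinuousPolynomial Q)
    (hsep : ∃ c, c < ‖Q z‖ ∧ ∀ w ∈ K, ‖Q w‖ ≤ c) :
    (∃ P : lp (fun _ : ℕ => ℂ) p → ℂ, IsContinuousPolynomial P ∧
      (∀ (k : ℕ → ℕ) (x x' : lp (fun _ : ℕ => ℂ) p), rootsOfUnityRel k x x' → P x' = P x) ∧
      ∃ c, c < ‖P z‖ ∧ ∀ w ∈ K, ‖P w‖ ≤ c) ∧
    ∀ m : ℕ, IsHomogeneousPolynomial m Q →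
      ∃ (m' : ℕ) (P : lp (fun _ : ℕ => ℂ) p → ℂ), IsHomogeneousPolynomial m' P ∧
        (∀ (k : ℕ → ℕ) (x x' : lp (fun _ : ℕ => ℂ) p), rootsOfUnityRel k x x' → P x' = P x) ∧
        ∃ c, c < ‖P z‖ ∧ ∀ w ∈ K, ‖P w‖ ≤ c := by
  obtain ⟨c, hcz, hcK⟩ := hsep
  rcases K.eq_empty_or_nonempty with rfl | ⟨w₀, hw₀⟩
  · exact ⟨⟨1, .of_mem_polynomialSubalgebra (one_mem _), fun _ _ _ _ => rfl, 0, by simp, by simp⟩,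
      fun _ _ => ⟨0, _, isHomogeneousPolynomial_const 1, fun _ _ _ _ => rfl, 0, by simp, by simp⟩⟩
  obtain ⟨N, s, ψ, hsepP⟩ := exists_symmetrizedPower_separates hp hKinv hjmono hKtrunc
    hQ.continuous ((norm_nonneg _).trans (hcK w₀ hw₀)) hcz hcK
  exact ⟨⟨_, hQ.symmetrizedPower, fun _ _ _ => symmetrizedPower_eq_of_rootsOfUnityRel, hsepP⟩,
    fun _ hm => ⟨_, _, hm.symmetrizedPower, fun _ _ _ => symmetrizedPower_eq_of_rootsOfUnityRel,
      hsepP⟩⟩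

/-- Let `X = ℓ^p` (`1 ≤ p < ∞`, complex) and let `R` be the group of
diagonal operators multiplying the `m`-th coordinate by an `m`-th root of unity. If `K` is
`R`-invariant with `π_{j_n}(K) ⊆ K` for some strictly increasing `(j_n)`, and `z ∉ K` is
separated from `K` by a continuous polynomial `Q`, then some `R`-invariant continuous
polynomial `P` separates `z` from `K`; if `Q` is homogeneous, `P` can be chosen homogeneous. -/
theorem statement9 (p : ℝ≥0∞) [Fact (1 ≤ p)] (hp : p ≠ ∞)
    (K : Set (lp (fun _ : ℕ => ℂ) p))
    (hKinv : ∀ (k : ℕ → ℕ) (x x' : lp (fun _ : ℕ => ℂ) p),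
      x ∈ K → rootsOfUnityRel k x x' → x' ∈ K)
    (j : ℕ → ℕ) (hjmono : StrictMono j)
    (hKtrunc : ∀ (n : ℕ) (x x' : lp (fun _ : ℕ => ℂ) p), x ∈ K →
      (∀ i : ℕ, x' i = if i < j n then x i else 0) → x' ∈ K)
    (z : lp (fun _ : ℕ => ℂ) p) (hz : z ∉ K)
    (Q : lp (fun _ : ℕ => ℂ) p → ℂ) (hQ : IsContinuousPolynomial Q)
    (hsep : ∃ c, c < ‖Q z‖ ∧ ∀ w ∈ K, ‖Q w‖ ≤ c) :
    (∃ P : lp (fun _ : ℕ => ℂ) p → ℂ, IsContinuousPolynomial P ∧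
      (∀ (k : ℕ → ℕ) (x x' : lp (fun _ : ℕ => ℂ) p), rootsOfUnityRel k x x' → P x' = P x) ∧
      ∃ c, c < ‖P z‖ ∧ ∀ w ∈ K, ‖P w‖ ≤ c) ∧
    ∀ m : ℕ, IsHomogeneousPolynomial m Q →
      ∃ (m' : ℕ) (P : lp (fun _ : ℕ => ℂ) p → ℂ), IsHomogeneousPolynomial m' P ∧
        (∀ (k : ℕ → ℕ) (x x' : lp (fun _ : ℕ => ℂ) p), rootsOfUnityRel k x x' → P x' = P x) ∧
        ∃ c, c < ‖P z‖ ∧ ∀ w ∈ K, ‖P w‖ ≤ c :=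
  statement9_general p hp K hKinv j hjmono hKtrunc z Q hQ hsep
end

section
/- Let 1 ≤ p < ∞ and X = ℓ^p, the Banach space of p-summable complex sequences indexed by m ≥ 1, and let R be the group of operators γ on X of the form (γx)_m = e^{2πik_m/m} x_m for arbitrary choices k₂, k₃, … ∈ ℕ ∪ {0}. If z ∈ X satisfies ‖z‖_p > 1, then there exists a homogeneous continuous polynomial P on X with P ∘ γ = P for every γ ∈ R such that sup_{‖x‖_p ≤ 1} |P(x)| < |P(z)|. -/
/-!
Choose a finite set `S` of coordinates with `σ := ∑_{j ∈ S} |z_j|^p > 1` and take the monomial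
`P x = ∏_{j ∈ S} x_j ^ a_j` with every `a_j` divisible by `j + 1`, so that `P` is `R`-invariant.
With `m = ∑ a_j` and weights `t_j = a_j / m`, weighted AM-GM gives
`|P x| ^ (p / m) ≤ ∏ t_j ^ t_j` on the unit ball, whereas `|P z| ^ (p / m) = ∏ (|z_j|^p) ^ t_j`.
At `t_j = |z_j|^p / σ` the second quantity is `σ` times the first; by continuity this strict
inequality persists for nearby rational weights, and these are realised by exponents `a_j` with
the required divisibility.
-/

open scoped ENNReal

open Filter Topology

theorem isHomogeneousPolynomial_prod {X ι : Type*} [NormedAddCommGroup X] [NormedSpace ℂ X]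
    [Fintype ι] (f : ι → X →L[ℂ] ℂ) :
    IsHomogeneousPolynomial (Fintype.card ι) (fun x => ∏ i, f i x) :=
  ⟨((ContinuousMultilinearMap.mkPiAlgebra ℂ ι ℂ).compContinuousLinearMap f).domDomCongr
      (Fintype.equivFin ι), fun x => by simp⟩

theorem isHomogeneousPolynomial_monomial {α : Type*} (p : ℝ≥0∞) [Fact (1 ≤ p)]
    (S : Finset α) (a : α → ℕ) :
    IsHomogeneousPolynomial (∑ j ∈ S, a j)
      (fun x : lp (fun _ : α => ℂ) p => ∏ j ∈ S, x j ^ a j) := by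
  have h := isHomogeneousPolynomial_prod
    (fun i : Σ j : S, Fin (a j) => lp.evalCLM ℂ (fun _ : α => ℂ) p (i.1 : α))
  simp only [Fintype.card_sigma, Fintype.card_fin, Finset.sum_coe_sort] at h
  convert h using 2 with x
  rw [Fintype.prod_sigma, ← Finset.prod_coe_sort S]
  simp [lp.evalCLM]

theorem exp_two_pi_I_mul_div_pow_eq_one (k d n : ℕ) (hd : d ∣ n) :
    Complex.exp (2 * Real.pi * Complex.I * k / d) ^ n = 1 := by
  obtain ⟨c, rfl⟩ := hd
  rcases eq_or_ne d 0 with rfl | hd0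
  · simp
  rw [← Complex.exp_nat_mul]
  convert Complex.exp_nat_mul_two_pi_mul_I (k * c) using 2
  push_cast
  field_simp

theorem monomial_eq_of_rootsOfUnityRel {p : ℝ≥0∞} [Fact (1 ≤ p)] (S : Finset ℕ) (a : ℕ → ℕ)
    (ha : ∀ j ∈ S, j + 1 ∣ a j) (k : ℕ → ℕ) (x x' : lp (fun _ : ℕ => ℂ) p)
    (h : rootsOfUnityRel k x x') : ∏ j ∈ S, x' j ^ a j = ∏ j ∈ S, x j ^ a j := by
  refine Finset.prod_congr rfl fun j hj => ?_
  have := exp_two_pi_I_mul_div_pow_eq_one (k j) (j + 1) (a j) (ha j hj)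
  push_cast at this
  rw [h j, mul_pow, this, one_mul]

section Weights

variable {ι : Type*}

noncomputable def normalizedWeights (S : Finset ι) (a : ι → ℕ) (j : ι) : ℝ :=
  a j / (∑ i ∈ S, a i : ℕ)

theorem normalizedWeights_nonneg (S : Finset ι) (a : ι → ℕ) (j : ι) :
    0 ≤ normalizedWeights S a j := by
  unfold normalizedWeights
  positivity

theorem sum_normalizedWeights (S : Finset ι) (a : ι → ℕ) (ha : ∑ j ∈ S, a j ≠ 0) :
    ∑ j ∈ S, normalizedWeights S a j = 1 := by
  simp only [normalizedWeights, ← Finset.sum_div]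
  rw [← Nat.cast_sum, div_self (Nat.cast_ne_zero.2 ha)]

theorem prod_rpow_le_prod_rpow_self_mul_sum (S : Finset ι) (t y : ι → ℝ)
    (ht : ∀ j ∈ S, 0 ≤ t j) (hsum : ∑ j ∈ S, t j = 1) (hy : ∀ j ∈ S, 0 ≤ y j) :
    ∏ j ∈ S, y j ^ t j ≤ (∏ j ∈ S, t j ^ t j) * ∑ j ∈ S, y j := by
  have hsplit : ∀ j ∈ S, y j ^ t j = (y j / t j) ^ t j * t j ^ t j := by
    intro j hj
    rcases (ht j hj).eq_or_lt with h0 | hpos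
    · simp [← h0]
    · rw [← Real.mul_rpow (div_nonneg (hy j hj) hpos.le) hpos.le, div_mul_cancel₀ _ hpos.ne']
  have hmul : ∀ j ∈ S, t j * (y j / t j) ≤ y j := by
    intro j hj
    rcases (ht j hj).eq_or_lt with h0 | hpos
    · simp [← h0, hy j hj]
    · rw [mul_div_cancel₀ _ hpos.ne']
  calc ∏ j ∈ S, y j ^ t j = (∏ j ∈ S, (y j / t j) ^ t j) * ∏ j ∈ S, t j ^ t j := by
        rw [Finset.prod_congr rfl hsplit, Finset.prod_mul_distrib]
    _ ≤ (∑ j ∈ S, t j * (y j / t j)) * ∏ j ∈ S, t j ^ t j := by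
        gcongr
        · exact Finset.prod_nonneg fun j hj => Real.rpow_nonneg (ht j hj) _
        · exact Real.geom_mean_le_arith_mean_weighted S t _ ht hsum
            fun j hj => div_nonneg (hy j hj) (ht j hj)
    _ ≤ (∑ j ∈ S, y j) * ∏ j ∈ S, t j ^ t j := by
        gcongr with j hj
        · exact Finset.prod_nonneg fun j hj => Real.rpow_nonneg (ht j hj) _
        · exact hmul j hj
    _ = _ := mul_comm _ _

theorem prod_pow_eq_prod_rpow_normalizedWeights_rpow (S : Finset ι) (a : ι → ℕ)
    (ha : ∑ j ∈ S, a j ≠ 0) (y : ι → ℝ) (hy : ∀ j ∈ S, 0 ≤ y j) {r : ℝ} (hr : r ≠ 0) :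
    ∏ j ∈ S, y j ^ a j =
      (∏ j ∈ S, (y j ^ r) ^ normalizedWeights S a j) ^ ((∑ j ∈ S, a j : ℕ) / r) := by
  rw [← Real.finsetProd_rpow _ _ fun j hj => Real.rpow_nonneg (Real.rpow_nonneg (hy j hj) _) _]
  refine Finset.prod_congr rfl fun j hj => ?_
  rw [← Real.rpow_mul (hy j hj), ← Real.rpow_mul (hy j hj), ← Real.rpow_natCast, normalizedWeights]
  congr 1
  field_simp

theorem tendsto_normalizedWeights_mul_ceil (S : Finset ι) (w : ι → ℝ)
    (hw : ∀ j ∈ S, 0 < w j) (hsum : ∑ j ∈ S, w j = 1) {L : ℕ} (hL : L ≠ 0) {j : ι} (hj : j ∈ S) :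
    Tendsto (fun n : ℕ => normalizedWeights S (fun i => L * ⌈w i * n⌉₊) j) atTop (𝓝 (w j)) := by
  have hdiv : ∀ i ∈ S,
      Tendsto (fun n : ℕ => ((L * ⌈w i * n⌉₊ : ℕ) : ℝ) / n) atTop (𝓝 (L * w i)) := by
    intro i hi
    have := ((tendsto_nat_ceil_mul_div_atTop (hw i hi).le).comp
      tendsto_natCast_atTop_atTop).const_mul (L : ℝ)
    refine this.congr fun n => ?_
    simp [mul_div_assoc]
  have hsumdiv : Tendsto (fun n : ℕ => ((∑ i ∈ S, L * ⌈w i * n⌉₊ : ℕ) : ℝ) / n) atTop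
      (𝓝 (∑ i ∈ S, L * w i)) := by
    simp only [Nat.cast_sum, Finset.sum_div]
    exact tendsto_finsetSum S hdiv
  rw [← Finset.mul_sum, hsum, mul_one] at hsumdiv
  have hlim := (hdiv j hj).div hsumdiv (Nat.cast_ne_zero.2 hL)
  rw [mul_div_cancel_left₀ _ (Nat.cast_ne_zero.2 hL)] at hlim
  refine hlim.congr' ((eventually_ne_atTop 0).mono fun n hn => ?_)
  rw [Pi.div_apply, div_div_div_cancel_right₀ (Nat.cast_ne_zero.2 hn)]
  rfl

theorem exists_exponents_prod_normalizedWeights_rpow_lt (S : Finset ι) (u : ι → ℝ)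
    (hu : ∀ j ∈ S, 0 < u j) (hsum : 1 < ∑ j ∈ S, u j) {L : ℕ} (hL : L ≠ 0) :
    ∃ a : ι → ℕ, 0 < ∑ j ∈ S, a j ∧ (∀ j ∈ S, L ∣ a j) ∧
      ∏ j ∈ S, normalizedWeights S a j ^ normalizedWeights S a j <
        ∏ j ∈ S, u j ^ normalizedWeights S a j := by
  set σ := ∑ j ∈ S, u j
  have hσ : 0 < σ := one_pos.trans hsum
  set w : ι → ℝ := fun j => u j / σ
  have hw : ∀ j ∈ S, 0 < w j := fun j hj => div_pos (hu j hj) hσ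
  have hwsum : ∑ j ∈ S, w j = 1 := by rw [← Finset.sum_div, div_self hσ.ne']
  set a : ℕ → ι → ℕ := fun n i => L * ⌈w i * n⌉₊
  have ht := fun j (hj : j ∈ S) => tendsto_normalizedWeights_mul_ceil S w hw hwsum hL hj
  have hleft : Tendsto (fun n => ∏ j ∈ S, normalizedWeights S (a n) j ^ normalizedWeights S (a n) j)
      atTop (𝓝 (∏ j ∈ S, w j ^ w j)) :=
    tendsto_finsetProd S fun j hj => (ht j hj).rpow (ht j hj) (Or.inl (hw j hj).ne')
  have hright : Tendsto (fun n => ∏ j ∈ S, u j ^ normalizedWeights S (a n) j) atTop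
      (𝓝 (∏ j ∈ S, u j ^ w j)) :=
    tendsto_finsetProd S fun j hj => tendsto_const_nhds.rpow (ht j hj) (Or.inl (hu j hj).ne')
  have hlimit : ∏ j ∈ S, w j ^ w j < ∏ j ∈ S, u j ^ w j := by
    have hsplit : ∏ j ∈ S, u j ^ w j = σ * ∏ j ∈ S, w j ^ w j := by
      rw [← Real.rpow_one σ, ← hwsum, Real.rpow_sum_of_pos hσ, ← Finset.prod_mul_distrib]
      refine Finset.prod_congr rfl fun j hj => ?_
      rw [← Real.mul_rpow hσ.le (hw j hj).le, mul_div_cancel₀ _ hσ.ne']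
    rw [hsplit]
    exact lt_mul_left (Finset.prod_pos fun j hj => Real.rpow_pos_of_pos (hw j hj) _) hsum
  obtain ⟨n, hn, hlt⟩ :=
    ((eventually_gt_atTop 0).and (hleft.eventually_lt hright hlimit)).exists
  obtain ⟨j, hj⟩ : S.Nonempty := Finset.nonempty_of_sum_ne_zero (hσ.ne')
  refine ⟨a n, ?_, fun i _ => dvd_mul_right L _, hlt⟩
  refine Finset.sum_pos' (fun i _ => Nat.zero_le _) ⟨j, hj, ?_⟩
  exact Nat.mul_pos (Nat.pos_of_ne_zero hL)
    (Nat.ceil_pos.2 (mul_pos (hw j hj) (Nat.cast_pos.2 hn)))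

end Weights

theorem exists_finset_one_lt_sum_norm_rpow {α : Type*} {E : α → Type*}
    [∀ i, NormedAddCommGroup (E i)] {p : ℝ≥0∞} (hp : 0 < p.toReal) (z : lp E p)
    (hz : 1 < ‖z‖) : ∃ S : Finset α, (∀ j ∈ S, z j ≠ 0) ∧ 1 < ∑ j ∈ S, ‖z j‖ ^ p.toReal := by
  classical
  have h1 : 1 < ‖z‖ ^ p.toReal := Real.one_lt_rpow hz hp
  obtain ⟨S, hS⟩ := ((lp.hasSum_norm hp z).eventually (eventually_gt_nhds h1)).exists
  refine ⟨S.filter (z · ≠ 0), fun j hj => (Finset.mem_filter.1 hj).2, ?_⟩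
  rwa [Finset.sum_filter_of_ne (p := (z · ≠ 0))
    fun j _ hj h0 => hj (by simp [h0, Real.zero_rpow hp.ne'])]

/-- On `X = ℓ^p` (`1 ≤ p < ∞`, complex), every `z` with `‖z‖ > 1` can be
separated from the closed unit ball by a homogeneous continuous polynomial invariant under
the group `R` of diagonal root-of-unity multipliers. -/
theorem statement10 (p : ℝ≥0∞) [Fact (1 ≤ p)] (hp : p ≠ ∞)
    (z : lp (fun _ : ℕ => ℂ) p) (hz : 1 < ‖z‖) :
    ∃ (m : ℕ) (P : lp (fun _ : ℕ => ℂ) p → ℂ), IsHomogeneousPolynomial m P ∧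
      (∀ (k : ℕ → ℕ) (x x' : lp (fun _ : ℕ => ℂ) p), rootsOfUnityRel k x x' → P x' = P x) ∧
      ∃ c, c < ‖P z‖ ∧ ∀ x : lp (fun _ : ℕ => ℂ) p, ‖x‖ ≤ 1 → ‖P x‖ ≤ c := by
  set r := p.toReal
  have hr : 0 < r := ENNReal.toReal_pos (zero_lt_one.trans_le Fact.out).ne' hp
  obtain ⟨S, hz0, hS⟩ := exists_finset_one_lt_sum_norm_rpow hr z hz
  have hL : ∏ j ∈ S, (j + 1) ≠ 0 := Finset.prod_ne_zero_iff.2 fun j _ => j.succ_ne_zero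
  obtain ⟨a, hm, hdvd, hlt⟩ := exists_exponents_prod_normalizedWeights_rpow_lt S (‖z ·‖ ^ r)
    (fun j hj => Real.rpow_pos_of_pos (norm_pos_iff.2 (hz0 j hj)) _) hS hL
  set t := normalizedWeights S a
  set K := ∏ j ∈ S, t j ^ t j
  have hK : 0 ≤ K :=
    Finset.prod_nonneg fun j _ => Real.rpow_nonneg (normalizedWeights_nonneg S a j) _
  have hnorm : ∀ x : lp (fun _ : ℕ => ℂ) p, ‖∏ j ∈ S, x j ^ a j‖ =
      (∏ j ∈ S, (‖x j‖ ^ r) ^ t j) ^ ((∑ j ∈ S, a j : ℕ) / r) := fun x => by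
    simp only [norm_prod, norm_pow]
    exact prod_pow_eq_prod_rpow_normalizedWeights_rpow S a hm.ne' _ (fun _ _ => norm_nonneg _)
      hr.ne'
  refine ⟨_, _, isHomogeneousPolynomial_monomial p S a,
    monomial_eq_of_rootsOfUnityRel S a fun j hj => (Finset.dvd_prod_of_mem _ hj).trans (hdvd j hj),
    K ^ ((∑ j ∈ S, a j : ℕ) / r), ?_, fun x hx => ?_⟩
  · rw [hnorm]
    exact Real.rpow_lt_rpow hK hlt (by positivity)
  · rw [hnorm]
    gcongr
    calc _ ≤ K * ∑ j ∈ S, ‖x j‖ ^ r :=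
          prod_rpow_le_prod_rpow_self_mul_sum S t _ (fun j _ => normalizedWeights_nonneg S a j)
            (sum_normalizedWeights S a hm.ne') fun _ _ => by positivity
      _ ≤ K * 1 := by
          gcongr
          exact (lp.sum_rpow_le_norm_rpow hr x S).trans (Real.rpow_le_one (norm_nonneg _) hx hr.le)
      _ = K := mul_one K
end

section
/- Let 1 ≤ p < ∞, fix a strictly increasing sequence of non-negative integers (n_k)_{k≥1} with n₁ = 0, and set N_k = {n_k + 1, …, n_{k+1}}. Let S be the group of all permutations σ of the positive integers with σ(N_k) = N_k for every k, acting on ℓ^p by (x_j)_j ↦ (x_{σ(j)})_j. If z ∈ ℓ^p satisfies ‖z‖_p > 1, then there exists a homogeneous continuous polynomial P on ℓ^p with P((x_{σ(j)})_j) = P(x) for every σ ∈ S and every x ∈ ℓ^p, such that sup_{‖x‖_p ≤ 1} |P(x)| < |P(z)|. -/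
/-!
Since `p < ∞`, the truncation `w` of `z` to the coordinates below some block boundary `n = n_k`
still has `‖w‖ > 1`; Hahn–Banach gives `g` of norm at most one with `g w = ‖w‖`. Block-preserving
permutations map `[0, n)` onto itself, so they act on the finitely many functionals
`φ_σ x = g (∑_{i < n} x_{σ i} e_i)`, `σ ∈ Perm [0, n)`, each of norm at most one. Hence
`P = ∑_σ φ_σ ^ M` is invariant and bounded by `|Perm [0, n)|` on the unit ball, while `|φ_1 z| > 1`.
The power sums `∑_σ (φ_σ z) ^ M` beat this bound for some `M`: after scaling the largest `|φ_σ z|`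
to one, the unimodular terms are simultaneously close to `1` for infinitely many `M` (compactness
of the torus), and the remaining terms decay.
-/

open scoped ENNReal

/-- A permutation `σ` of the index set preserves the blocks
`N_k = {n_k, …, n_{k+1} - 1}` (0-based) determined by the strictly increasing sequence
`nseq` with `nseq 0 = 0`. -/
def PreservesBlocks (nseq : ℕ → ℕ) (σ : Equiv.Perm ℕ) : Prop :=
  ∀ k j : ℕ, nseq k ≤ j → j < nseq (k + 1) → nseq k ≤ σ j ∧ σ j < nseq (k + 1)

open Filter Topology

section PowerSums

variable {ι : Type*} [Fintype ι]

theorem frequently_forall_norm_pow_sub_one_lt (u : ι → ℂ) (hu : ∀ i, ‖u i‖ = 1) {ε : ℝ}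
    (hε : 0 < ε) : ∃ᶠ M in atTop, ∀ i, ‖u i ^ M - 1‖ < ε := by
  set v : ℕ → ι → ℂ := fun M i => u i ^ M
  have hv : ∀ M, v M ∈ Metric.closedBall (0 : ι → ℂ) 1 := fun M => by
    simpa using (pi_norm_le_iff_of_nonneg zero_le_one).2 fun i => by simp [v, hu]
  obtain ⟨b, -, φ, hφ, hconv⟩ := tendsto_subseq_of_bounded Metric.isBounded_closedBall hv
  obtain ⟨N, hN⟩ := Metric.cauchySeq_iff'.1 hconv.cauchySeq ε hε
  refine frequently_atTop.2 fun L => ⟨φ (L + N) - φ N, by have := hφ.add_le_nat L N; omega,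
    fun i => ?_⟩
  have hdist := (dist_le_pi_dist (v (φ (L + N))) (v (φ N)) i).trans_lt (hN (L + N) (by omega))
  calc ‖u i ^ (φ (L + N) - φ N) - 1‖ = ‖u i ^ φ (L + N) - u i ^ φ N‖ := by
        rw [← pow_mul_pow_sub (u i) (hφ.monotone (by omega : N ≤ L + N)), ← mul_sub_one,
          norm_mul, norm_pow, hu, one_pow, one_mul]
    _ < ε := by simpa [v, dist_eq_norm] using hdist

theorem frequently_half_le_norm_sum_pow (u : ι → ℂ) (hu : ∀ i, ‖u i‖ ≤ 1) {i₁ : ι}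
    (hi₁ : ‖u i₁‖ = 1) : ∃ᶠ M in atTop, 1 / 2 ≤ ‖∑ i, u i ^ M‖ := by
  classical
  set J := Finset.univ.filter fun i => ‖u i‖ = 1
  have hJ : 1 ≤ (J.card : ℝ) := by
    exact_mod_cast Finset.card_pos.2 ⟨i₁, Finset.mem_filter.2 ⟨Finset.mem_univ _, hi₁⟩⟩
  have hnear : ∃ᶠ M in atTop, ∀ i ∈ J, ‖u i ^ M - 1‖ < 1 / 4 :=
    (frequently_forall_norm_pow_sub_one_lt (fun i : J => u i)
      (fun i => (Finset.mem_filter.1 i.2).2) (by norm_num)).mono fun M h i hi => h ⟨i, hi⟩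
  have hsmall : ∀ᶠ M in atTop, ∑ i ∈ Jᶜ, ‖u i‖ ^ M < 1 / 4 := by
    have : Tendsto (fun M => ∑ i ∈ Jᶜ, ‖u i‖ ^ M) atTop (𝓝 0) := by
      simpa using tendsto_finsetSum Jᶜ fun i hi => tendsto_pow_atTop_nhds_zero_of_lt_one
        (norm_nonneg _) ((hu i).lt_of_ne fun h => Finset.mem_compl.1 hi (by simp [J, h]))
    exact this.eventually (gt_mem_nhds (by norm_num))
  refine (hnear.and_eventually hsmall).mono fun M ⟨hJM, hJcM⟩ => ?_
  have hJsum : ‖∑ i ∈ J, (u i ^ M - 1)‖ ≤ J.card / 4 := by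
    have := norm_sum_le_of_le J fun i hi => (hJM i hi).le
    rw [Finset.sum_const, nsmul_eq_mul] at this
    linarith
  have hJcsum : ‖∑ i ∈ Jᶜ, u i ^ M‖ ≤ 1 / 4 :=
    (norm_sum_le_of_le Jᶜ fun i _ => (norm_pow (u i) M).le).trans hJcM.le
  have hdev : ‖∑ i, u i ^ M - J.card‖ ≤ J.card / 4 + 1 / 4 := by
    have hsplit : ∑ i, u i ^ M - J.card = ∑ i ∈ J, (u i ^ M - 1) + ∑ i ∈ Jᶜ, u i ^ M := by
      rw [Finset.sum_sub_distrib, ← Finset.sum_add_sum_compl J, Finset.sum_const, nsmul_one]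
      ring
    rw [hsplit]
    exact (norm_add_le _ _).trans (add_le_add hJsum hJcsum)
  have := norm_sub_norm_le (J.card : ℂ) (∑ i, u i ^ M)
  rw [norm_sub_rev, Complex.norm_natCast] at this
  linarith

theorem exists_card_mul_pow_lt_norm_sum_pow (c : ι → ℂ) {B : ℝ} (hB : 0 ≤ B) {i₀ : ι}
    (hi₀ : B < ‖c i₀‖) : ∃ M, Fintype.card ι * B ^ M < ‖∑ i, c i ^ M‖ := by
  have : Nonempty ι := ⟨i₀⟩
  obtain ⟨i₁, hi₁⟩ := Finite.exists_max fun i => ‖c i‖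
  set ρ := ‖c i₁‖
  have hρ : 0 < ρ := hB.trans_lt (hi₀.trans_le (hi₁ i₀))
  have hunit : ∀ i, ‖c i / ρ‖ = ‖c i‖ / ρ := fun i => by
    rw [norm_div, Complex.norm_real, Real.norm_of_nonneg hρ.le]
  have hfreq := frequently_half_le_norm_sum_pow (fun i => c i / ρ)
    (fun i => by rw [hunit, div_le_one hρ]; exact hi₁ i) (i₁ := i₁) (by rw [hunit, div_self hρ.ne'])
  have hdecay : ∀ᶠ M in atTop, Fintype.card ι * (B / ρ) ^ M < 1 / 2 := by
    have := (tendsto_pow_atTop_nhds_zero_of_lt_one (div_nonneg hB hρ.le)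
      ((div_lt_one hρ).2 (hi₀.trans_le (hi₁ i₀)))).const_mul (Fintype.card ι : ℝ)
    rw [mul_zero] at this
    exact this.eventually (gt_mem_nhds (by norm_num))
  obtain ⟨M, hM, hMB⟩ := (hfreq.and_eventually hdecay).exists
  refine ⟨M, ?_⟩
  have hscale : ‖∑ i, c i ^ M‖ = ρ ^ M * ‖∑ i, (c i / ρ) ^ M‖ := by
    simp_rw [div_pow, ← Finset.sum_div, norm_div, norm_pow, Complex.norm_real,
      Real.norm_of_nonneg hρ.le]
    field_simp
  calc (Fintype.card ι : ℝ) * B ^ M = ρ ^ M * (Fintype.card ι * (B / ρ) ^ M) := by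
        rw [div_pow]; field_simp
    _ < ρ ^ M * (1 / 2) := by gcongr
    _ ≤ ‖∑ i, c i ^ M‖ := by rw [hscale]; gcongr

end PowerSums

section HomogeneousPolynomial

variable {X : Type*} [NormedAddCommGroup X] [NormedSpace ℂ X]

theorem isHomogeneousPolynomial_pow (φ : StrongDual ℂ X) (m : ℕ) :
    IsHomogeneousPolynomial m fun x => φ x ^ m :=
  ⟨(ContinuousMultilinearMap.mkPiAlgebraFin ℂ m ℂ).compContinuousLinearMap fun _ => φ,
    fun x => by simp⟩

theorem IsHomogeneousPolynomial.sum {ι : Type*} [Fintype ι] {m : ℕ} {P : ι → X → ℂ}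
    (hP : ∀ i, IsHomogeneousPolynomial m (P i)) :
    IsHomogeneousPolynomial m fun x => ∑ i, P i x := by
  choose A hA using hP
  exact ⟨∑ i, A i, fun x => by simp [hA]⟩

end HomogeneousPolynomial

namespace lp

variable {ι : Type*} [DecidableEq ι] (p : ℝ≥0∞) [Fact (1 ≤ p)]

noncomputable def truncComp (s : Finset ι) (π : ι → ι) :
    lp (fun _ : ι => ℂ) p →L[ℂ] lp (fun _ : ι => ℂ) p :=
  ∑ i ∈ s, (singleContinuousLinearMap ℂ (fun _ : ι => ℂ) p i).comp
    (evalCLM ℂ (fun _ : ι => ℂ) p (π i))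

variable {p}

theorem truncComp_apply (s : Finset ι) (π : ι → ι) (x : lp (fun _ : ι => ℂ) p) :
    truncComp p s π x = ∑ i ∈ s, lp.single p i (x (π i)) := by
  simp [truncComp, evalCLM]

theorem norm_truncComp_le (hp : p ≠ ∞) {s : Finset ι} {π : ι → ι} (hπ : Set.InjOn π s)
    (x : lp (fun _ : ι => ℂ) p) : ‖truncComp p s π x‖ ≤ ‖x‖ := by
  have hp0 : 0 < p.toReal := ENNReal.toReal_pos (zero_lt_one.trans_le Fact.out).ne' hp
  rw [← Real.rpow_le_rpow_iff (norm_nonneg _) (norm_nonneg _) hp0, truncComp_apply,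
    lp.norm_sum_single hp0 (fun i => x (π i)),
    ← Finset.sum_image (f := fun j => ‖x j‖ ^ p.toReal) hπ]
  exact lp.sum_rpow_le_norm_rpow hp0 x _

theorem truncComp_congr {s : Finset ι} {π π' : ι → ι} (h : ∀ i ∈ s, π i = π' i) :
    truncComp p s π = truncComp p s π' := by
  ext1 x
  simp only [truncComp_apply]
  exact Finset.sum_congr rfl fun i hi => by rw [h i hi]

theorem truncComp_precomp (s : Finset ι) (π : ι → ι) {τ : ι → ι} {x x' : lp (fun _ : ι => ℂ) p}
    (hx' : ∀ i, x' i = x (τ i)) : truncComp p s π x' = truncComp p s (τ ∘ π) x := by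
  simp only [truncComp_apply, hx', Function.comp_apply]

theorem tendsto_truncComp_range_id (hp : p ≠ ∞) (x : lp (fun _ : ℕ => ℂ) p) :
    Tendsto (fun n => truncComp p (Finset.range n) id x) atTop (𝓝 x) := by
  simpa only [truncComp_apply, id] using (lp.hasSum_single hp x).tendsto_sum_nat

open Equiv.Perm in
theorem sum_pow_truncComp_ofSubtype_eq (g : StrongDual ℂ (lp (fun _ : ι => ℂ) p))
    (s : Finset ι) (M : ℕ) {τ : Equiv.Perm ι} (hτ : ∀ i, τ i ∈ s ↔ i ∈ s)
    {x x' : lp (fun _ : ι => ℂ) p} (hx' : ∀ i, x' i = x (τ i)) :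
    ∑ σ : Equiv.Perm s, g (truncComp p s (ofSubtype σ) x') ^ M =
      ∑ σ : Equiv.Perm s, g (truncComp p s (ofSubtype σ) x) ^ M := by
  refine Fintype.sum_equiv (Equiv.mulLeft (τ.subtypePerm hτ)) _ _ fun σ => ?_
  rw [truncComp_precomp s _ hx', truncComp_congr fun i hi => ?_]
  simp [ofSubtype_apply_of_mem, hi]

end lp

section Blocks

variable {nseq : ℕ → ℕ}

theorem exists_block (hmono : StrictMono nseq) (h0 : nseq 0 = 0) (j : ℕ) :
    ∃ k, nseq k ≤ j ∧ j < nseq (k + 1) := by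
  classical
  have hex : ∃ k, j < nseq (k + 1) := ⟨j, (Nat.lt_succ_self j).trans_le (hmono.id_le _)⟩
  refine ⟨Nat.find hex, ?_, Nat.find_spec hex⟩
  rcases hk : Nat.find hex with _ | k
  · simp [h0]
  · exact not_lt.1 (Nat.find_min hex (hk ▸ Nat.lt_succ_self k))

theorem lt_iff_of_mem_block (hmono : StrictMono nseq) {k j m : ℕ} (hk : nseq k ≤ j)
    (hk' : j < nseq (k + 1)) : j < nseq m ↔ k < m :=
  ⟨fun h => by by_contra! hmk; exact (hmono.monotone hmk).trans hk |>.not_gt h,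
    fun h => hk'.trans_le (hmono.monotone h)⟩

theorem PreservesBlocks.apply_lt_iff (hmono : StrictMono nseq) (h0 : nseq 0 = 0)
    {τ : Equiv.Perm ℕ} (hτ : PreservesBlocks nseq τ) (j m : ℕ) :
    τ j < nseq m ↔ j < nseq m := by
  obtain ⟨k, hk, hk'⟩ := exists_block hmono h0 j
  obtain ⟨hτk, hτk'⟩ := hτ k j hk hk'
  rw [lt_iff_of_mem_block hmono hk hk', lt_iff_of_mem_block hmono hτk hτk']

end Blocks

/-- Let `1 ≤ p < ∞`, let `(n_k)` be strictly increasing with `n_1 = 0`, and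
let `S` be the group of permutations of the indices preserving each block
`N_k = {n_k + 1, …, n_{k+1}}`, acting on `ℓ^p` by permuting coordinates. Every `z ∈ ℓ^p`
with `‖z‖ > 1` is separated from the closed unit ball by an `S`-invariant homogeneous
continuous polynomial. -/
theorem statement13 (p : ℝ≥0∞) [Fact (1 ≤ p)] (hp : p ≠ ∞)
    (nseq : ℕ → ℕ) (hmono : StrictMono nseq) (h0 : nseq 0 = 0)
    (z : lp (fun _ : ℕ => ℂ) p) (hz : 1 < ‖z‖) :
    ∃ (m : ℕ) (P : lp (fun _ : ℕ => ℂ) p → ℂ), IsHomogeneousPolynomial m P ∧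
      (∀ σ : Equiv.Perm ℕ, PreservesBlocks nseq σ →
        ∀ x x' : lp (fun _ : ℕ => ℂ) p, (∀ i : ℕ, x' i = x (σ i)) → P x' = P x) ∧
      ∃ c, c < ‖P z‖ ∧ ∀ x : lp (fun _ : ℕ => ℂ) p, ‖x‖ ≤ 1 → ‖P x‖ ≤ c := by
  obtain ⟨n₀, hn₀⟩ : ∃ n₀, 1 < ‖lp.truncComp p (Finset.range (nseq n₀)) id z‖ :=
    ((lp.tendsto_truncComp_range_id hp z).comp hmono.tendsto_atTop).norm.eventually
      (lt_mem_nhds hz) |>.exists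
  set s := Finset.range (nseq n₀)
  obtain ⟨g, hg, hgz⟩ := exists_dual_vector'' ℂ (lp.truncComp p s id z)
  set φ : Equiv.Perm s → StrongDual ℂ (lp (fun _ : ℕ => ℂ) p) :=
    fun σ => g.comp (lp.truncComp p s (Equiv.Perm.ofSubtype σ))
  have hφ : ∀ σ x, ‖φ σ x‖ ≤ ‖x‖ := fun σ x =>
    (g.le_of_opNorm_le hg _).trans <| by
      simpa using lp.norm_truncComp_le hp (Equiv.Perm.ofSubtype σ).injective.injOn x
  have hφz : 1 < ‖φ 1 z‖ := by simpa [φ, hgz] using hn₀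
  obtain ⟨M, hM⟩ := exists_card_mul_pow_lt_norm_sum_pow (fun σ => φ σ z) zero_le_one hφz
  refine ⟨M, fun x => ∑ σ, φ σ x ^ M,
    IsHomogeneousPolynomial.sum fun σ => isHomogeneousPolynomial_pow (φ σ) M,
    fun τ hτ x x' hx' => lp.sum_pow_truncComp_ofSubtype_eq g s M
      (fun i => by simpa [s] using hτ.apply_lt_iff hmono h0 i n₀) hx',
    Fintype.card (Equiv.Perm s), by simpa using hM, fun x hx => ?_⟩
  calc ‖∑ σ, φ σ x ^ M‖ ≤ ∑ _σ : Equiv.Perm s, 1 :=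
        norm_sum_le_of_le _ fun σ _ => by
          rw [norm_pow]; exact pow_le_one₀ (norm_nonneg _) ((hφ σ x).trans hx)
    _ = Fintype.card (Equiv.Perm s) := by simp
end

section
/- Let P be a continuous polynomial on ℓ^∞ (bounded complex sequences with the sup norm) such that P(x + y) = P(x) for every x ∈ ℓ^∞ and every y ∈ c₀. If z = (z_j)_{j≥1} ∈ ℓ^∞ satisfies limsup_{j→∞} |z_j| ≤ 1, then |P(z)| ≤ sup_{‖x‖_∞ ≤ 1} |P(x)|; that is, z cannot be separated from the closed unit ball of ℓ^∞ by any such c₀-translation-invariant continuous polynomial. -/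
open scoped ENNReal

/-!
Scaling `z` by `r < 1` pushes all but finitely many coordinates into the unit disc. Subtracting
the finitely many remaining ones is a translation by an element of `c₀`, which does not change
`P`, and lands in the unit ball; so `‖P (r • z)‖ ≤ c`, and continuity of `P` lets `r → 1`.
-/

open Filter Topology

theorem IsContinuousPolynomial.continuous_s15 {X : Type*} [NormedAddCommGroup X] [NormedSpace ℂ X]
    {P : X → ℂ} (hP : IsContinuousPolynomial P) : Continuous P := by
  obtain ⟨N, a₀, A, hA⟩ := hP
  rw [funext hA]
  exact continuous_const.add <| continuous_finsetSum _ fun k _ =>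
    (A k).cont.comp <| continuous_pi fun _ => continuous_id

namespace lp

variable {E : Type*} [NormedAddCommGroup E]

theorem exists_tendsto_zero_norm_sub_le (x : lp (fun _ : ℕ => E) ∞) {C : ℝ} (hC : 0 ≤ C)
    (hx : ∀ᶠ j in atTop, ‖x j‖ ≤ C) :
    ∃ y : lp (fun _ : ℕ => E) ∞, Tendsto (fun j => y j) atTop (𝓝 0) ∧ ‖x - y‖ ≤ C := by
  obtain ⟨N, hN⟩ := eventually_atTop.1 hx
  have hmem : Memℓp (fun j => if j < N then x j else 0) ∞ :=
    (lp.memℓp x).mono' fun j => by split_ifs <;> simp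
  refine ⟨⟨_, hmem⟩, ?_, ?_⟩
  · refine tendsto_const_nhds.congr' ?_
    filter_upwards [eventually_ge_atTop N] with j hj
    exact (if_neg (not_lt.2 hj)).symm
  · refine lp.norm_le_of_forall_le hC fun j => ?_
    change ‖x j - if j < N then x j else 0‖ ≤ C
    split_ifs with hj
    · simpa using hC
    · simpa using hN j (not_lt.1 hj)

end lp

section TranslationInvariant

variable {E F : Type*} [NormedAddCommGroup E] [NormedAddCommGroup F]
  {P : lp (fun _ : ℕ => E) ∞ → F}

theorem norm_le_of_eventually_norm_le_one
    (hPinv : ∀ x y : lp (fun _ : ℕ => E) ∞,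
      Tendsto (fun j : ℕ => y j) atTop (𝓝 0) → P (x + y) = P x)
    {c : ℝ} (hc : ∀ x : lp (fun _ : ℕ => E) ∞, ‖x‖ ≤ 1 → ‖P x‖ ≤ c)
    {z : lp (fun _ : ℕ => E) ∞} (hz : ∀ᶠ j in atTop, ‖z j‖ ≤ 1) : ‖P z‖ ≤ c := by
  obtain ⟨y, hy, hzy⟩ := lp.exists_tendsto_zero_norm_sub_le z zero_le_one hz
  calc ‖P z‖ = ‖P (z - y)‖ := by rw [← hPinv (z - y) y hy, sub_add_cancel]
    _ ≤ c := hc (z - y) hzy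

theorem norm_le_of_limsup_norm_le_one [NormedSpace ℝ E] (hP : Continuous P)
    (hPinv : ∀ x y : lp (fun _ : ℕ => E) ∞,
      Tendsto (fun j : ℕ => y j) atTop (𝓝 0) → P (x + y) = P x)
    {c : ℝ} (hc : ∀ x : lp (fun _ : ℕ => E) ∞, ‖x‖ ≤ 1 → ‖P x‖ ≤ c)
    {z : lp (fun _ : ℕ => E) ∞} (hz : limsup (fun j : ℕ => ‖z j‖) atTop ≤ 1) : ‖P z‖ ≤ c := by
  have hbdd : IsBoundedUnder (· ≤ ·) atTop (fun j : ℕ => ‖z j‖) :=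
    isBoundedUnder_of ⟨‖z‖, lp.norm_apply_le_norm ENNReal.top_ne_zero z⟩
  have hscaled : ∀ r : ℝ, r ∈ Set.Ioo 0 1 → ‖P (r • z)‖ ≤ c := fun r ⟨hr0, hr1⟩ => by
    refine norm_le_of_eventually_norm_le_one hPinv hc ?_
    filter_upwards [eventually_lt_of_limsup_lt (hz.trans_lt (one_lt_inv₀ hr0 |>.2 hr1)) hbdd]
      with j hj
    rw [lp.coeFn_smul, Pi.smul_apply, norm_smul, Real.norm_of_nonneg hr0.le]
    calc r * ‖z j‖ ≤ r * r⁻¹ := by gcongr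
      _ = 1 := mul_inv_cancel₀ hr0.ne'
  have hlim : Tendsto (fun r : ℝ => ‖P (r • z)‖) (𝓝[<] 1) (𝓝 ‖P z‖) := by
    have hcont : Continuous fun r : ℝ => P (r • z) := hP.comp (continuous_id.smul continuous_const)
    simpa using (hcont.tendsto 1).norm.mono_left nhdsWithin_le_nhds
  refine le_of_tendsto hlim ?_
  filter_upwards [Ioo_mem_nhdsLT zero_lt_one] using hscaled

end TranslationInvariant

/-- Let `P` be a continuous polynomial on `ℓ^∞` with `P(x + y) = P(x)` for
every `x ∈ ℓ^∞` and `y ∈ c₀`. If `z ∈ ℓ^∞` has `limsup_j |z_j| ≤ 1`, then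
`|P(z)| ≤ sup_{‖x‖ ≤ 1} |P(x)|`: `z` cannot be separated from the closed unit ball of `ℓ^∞`
by any such `c₀`-translation-invariant continuous polynomial. -/
theorem statement15 (P : lp (fun _ : ℕ => ℂ) ∞ → ℂ) (hP : IsContinuousPolynomial P)
    (hPinv : ∀ x y : lp (fun _ : ℕ => ℂ) ∞,
      Filter.Tendsto (fun j : ℕ => y j) Filter.atTop (nhds 0) → P (x + y) = P x)
    (z : lp (fun _ : ℕ => ℂ) ∞)
    (hz : Filter.limsup (fun j : ℕ => ‖z j‖) Filter.atTop ≤ 1) :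
    ∀ c : ℝ, (∀ x : lp (fun _ : ℕ => ℂ) ∞, ‖x‖ ≤ 1 → ‖P x‖ ≤ c) → ‖P z‖ ≤ c :=
  fun _ hc => norm_le_of_limsup_norm_le_one hP.continuous_s15 hPinv hc hz
end
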